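/- arXiv:0905.0837 — 5 statements merged into one kernel-verified Lean document; each statement's English description precedes it below -/
import Mathlib

section
/- For any complex numbers λ_1, …, λ_n, the Jacobian determinant of the map σ^n = (σ_1, …, σ_n) : ℂ^n → ℂ^n of elementary symmetric polynomials at the point (λ_1, …, λ_n) equals ∏_{i<j} (λ_i − λ_j). -/
/-!
Differentiating `σ_{i+1}` in the direction of `λ_j` gives `σ_i` of the remaining variables, and
peeling `λ_j` off repeatedly (`σ_i(λ) = σ_i(λ∖λ_j) + λ_j σ_{i-1}(λ∖λ_j)`) expresses this as
`P_i(λ_j)`, where `P_i(X) = ∑_{m ≤ i} σ_{i-m}(λ) (-X)^m` (`Multiset.esymmErasePoly`) has degree `i`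
and leading coefficient `(-1)^i`. The Jacobian matrix is therefore `(P_i(λ_j))_{i,j}`, whose determinant is
`∏_i (-1)^i` times the Vandermonde determinant `∏_{i<j} (λ_j - λ_i)`.
-/

open Finset Polynomial Matrix

namespace Multiset

variable {R : Type*}

section CommSemiring

variable [CommSemiring R]

theorem esymm_zero (s : Multiset R) : s.esymm 0 = 1 := by
  simp [esymm]

theorem esymm_cons_succ (a : R) (s : Multiset R) (r : ℕ) :
    (a ::ₘ s).esymm (r + 1) = s.esymm (r + 1) + a * s.esymm r := by
  simp [esymm, powersetCard_cons, sum_map_mul_left]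

end CommSemiring

variable [CommRing R]

theorem esymm_eq_sum_esymm_cons (a : R) (s : Multiset R) (r : ℕ) :
    s.esymm r = ∑ m ∈ Finset.range (r + 1), (-a) ^ m * (a ::ₘ s).esymm (r - m) := by
  induction r with
  | zero => simp [esymm_zero]
  | succ r ih =>
    have htail : ∑ m ∈ Finset.range (r + 1), (-a) ^ (m + 1) * (a ::ₘ s).esymm (r - m)
        = -a * s.esymm r := by
      rw [ih, mul_sum]
      exact sum_congr rfl fun m _ => by ring
    rw [sum_range_succ']
    simp only [Nat.add_sub_add_right, pow_zero, one_mul, Nat.sub_zero, htail]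
    linear_combination (esymm_cons_succ a s r).symm

noncomputable def esymmErasePoly (S : Multiset R) (r : ℕ) : R[X] :=
  ∑ m ∈ Finset.range (r + 1), C ((-1) ^ m * S.esymm (r - m)) * X ^ m

theorem natDegree_esymmErasePoly_le (S : Multiset R) (r : ℕ) :
    (esymmErasePoly S r).natDegree ≤ r :=
  natDegree_sum_le_of_forall_le _ _ fun m hm =>
    (natDegree_C_mul_X_pow_le _ m).trans (Nat.lt_succ_iff.1 (Finset.mem_range.1 hm))

theorem coeff_esymmErasePoly_self (S : Multiset R) (r : ℕ) :
    (esymmErasePoly S r).coeff r = (-1) ^ r := by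
  simp only [esymmErasePoly, finsetSum_coeff, coeff_C_mul_X_pow, sum_ite_eq, Finset.mem_range,
    Nat.lt_succ_self, if_true, Nat.sub_self, esymm_zero, mul_one]

theorem eval_esymmErasePoly_cons (a : R) (s : Multiset R) (r : ℕ) :
    (esymmErasePoly (a ::ₘ s) r).eval a = s.esymm r := by
  simp only [esymmErasePoly, eval_finsetSum, eval_mul, eval_C, eval_pow, eval_X,
    esymm_eq_sum_esymm_cons a s r, neg_pow a, mul_right_comm]

end Multiset

theorem Finset.val_map_update {ι R : Type*} [DecidableEq ι] {s : Finset ι} {j : ι} (hj : j ∈ s)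
    (x : ι → R) (c : R) :
    s.val.map (Function.update x j c) = c ::ₘ (s.erase j).val.map x := by
  rw [← Multiset.cons_erase hj, Multiset.map_cons, Function.update_self, ← Finset.erase_val]
  congr 1
  exact Multiset.map_congr rfl fun k hk => Function.update_of_ne (ne_of_mem_erase hk) _ _

theorem Matrix.det_of_eval_of_natDegree_le {R : Type*} [CommRing R] {n : ℕ} (p : Fin n → R[X])
    (v : Fin n → R) (h_deg : ∀ i, (p i).natDegree ≤ i) :
    (of fun i j => (p i).eval (v j)).det = (∏ i, (p i).coeff i) * (vandermonde v).det := by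
  rw [← det_transpose, show (of fun i j => (p i).eval (v j))ᵀ = of fun i j => (p j).eval (v i)
    from rfl, eval_matrixOfPolynomials_eq_vandermonde_mul_matrixOfPolynomials v p h_deg, det_mul,
    det_of_isUpperTriangular (matrixOfPolynomials_blockTriangular p h_deg), mul_comm]
  rfl

theorem Fin.prod_neg_one_pow_mul_prod_Ioi_sub {R : Type*} [CommRing R] {n : ℕ} (v : Fin n → R) :
    (∏ i : Fin n, (-1 : R) ^ (i : ℕ)) * ∏ i, ∏ j ∈ Ioi i, (v j - v i)
      = ∏ i, ∏ j ∈ Ioi i, (v i - v j) := by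
  have hsign : ∏ i : Fin n, (-1 : R) ^ (i : ℕ) = ∏ i : Fin n, (-1) ^ #(Ioi i) :=
    Fintype.prod_equiv Fin.revPerm _ _ fun i => by
      rw [Fin.card_Ioi, Fin.revPerm_apply, Fin.val_rev]
      congr 1
      omega
  simp only [hsign, ← prod_mul_distrib, ← prod_neg, neg_sub]

section Derivative

variable {𝕜 ι F : Type*} [NontriviallyNormedField 𝕜] [DecidableEq ι] [Fintype ι]
  [NormedAddCommGroup F] [NormedSpace 𝕜 F]

theorem fderiv_apply_single_eq_deriv_update {f : (ι → 𝕜) → F} {x : ι → 𝕜}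
    (hf : DifferentiableAt 𝕜 f x) (j : ι) :
    fderiv 𝕜 f x (Pi.single j 1) = deriv (fun c => f (Function.update x j c)) (x j) := by
  have hf' : HasFDerivAt f (fderiv 𝕜 f x) (Function.update x j (x j)) := by
    rw [Function.update_eq_self]
    exact hf.hasFDerivAt
  exact (hf'.comp_hasDerivAt (x j) (hasDerivAt_update x j (x j))).deriv.symm

theorem fderiv_esymm_apply_single (x : ι → 𝕜) (r : ℕ) (j : ι) :
    fderiv 𝕜 (fun y : ι → 𝕜 => (univ.val.map y).esymm (r + 1)) x (Pi.single j 1)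
      = ((univ.erase j).val.map x).esymm r := by
  have hdiff : DifferentiableAt 𝕜 (fun y : ι → 𝕜 => (univ.val.map y).esymm (r + 1)) x := by
    simp only [Finset.esymm_map_val]
    fun_prop
  rw [fderiv_apply_single_eq_deriv_update hdiff]
  simp [Finset.val_map_update (mem_univ j), Multiset.esymm_cons_succ]

end Derivative

/-- The Jacobian determinant of the elementary symmetric map
`σⁿ = (σ₁, …, σₙ) : ℂⁿ → ℂⁿ` at `(λ₁,…,λₙ)` equals `∏_{i<j} (λᵢ − λⱼ)`. -/
theorem jacobian_esymm
    (n : ℕ) (l : Fin n → ℂ) :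
    (Matrix.of fun i j : Fin n =>
        fderiv ℂ (fun x : Fin n → ℂ =>
          ∑ s ∈ Finset.univ.powersetCard (i.1 + 1), ∏ k ∈ s, x k) l (Pi.single j 1)).det
      = ∏ i : Fin n, ∏ j ∈ Finset.Ioi i, (l i - l j) := by
  calc _ = (of fun i j : Fin n =>
          (Multiset.esymmErasePoly (univ.val.map l) i).eval (l j)).det := by
        congr 1
        ext i j
        have hl : univ.val.map l = l j ::ₘ (univ.erase j).val.map l := by
          simpa using Finset.val_map_update (mem_univ j) l (l j)
        simp only [of_apply, ← Finset.esymm_map_val, fderiv_esymm_apply_single, hl,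
          Multiset.eval_esymmErasePoly_cons]
    _ = (∏ i : Fin n, (-1 : ℂ) ^ (i : ℕ)) * ∏ i : Fin n, ∏ j ∈ Ioi i, (l j - l i) := by
        rw [det_of_eval_of_natDegree_le _ _ fun i => Multiset.natDegree_esymmErasePoly_le _ _,
          det_vandermonde]
        simp only [Multiset.coeff_esymmErasePoly_self]
    _ = _ := Fin.prod_neg_one_pow_mul_prod_Ioi_sub l
end

section
/- For complex numbers λ_1, …, λ_n, the determinant of the k×k leading principal minor B_k of the Bezoutiant matrix B = (s_{i+j−2})_{1≤i,j≤n} (where s_m is the m-th power sum of the λ's, with s_0 = n) equals ∑_{i_1 < i_2 < ⋯ < i_k} ∏_{1 ≤ a < b ≤ k} (λ_{i_a} − λ_{i_b})^2. -/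
open Finset
open scoped Matrix

/-!
Writing `V` for the `n × k` matrix `(λ_a ^ j)`, the minor is the Gram matrix `B_k = Vᵀ V`.
By the Cauchy–Binet formula `det B_k` is the sum, over the `k`-subsets `S` of the indices, of
`det (V_S) ^ 2`, where `V_S` keeps the rows indexed by `S`. Each `V_S` is a square Vandermonde
matrix, so `det (V_S) ^ 2 = ∏_{a < b in S} (λ_a - λ_b) ^ 2`.
-/

theorem StrictMono.sort_comp_perm {α : Type*} [LinearOrder α] {k : ℕ} {g : Fin k → α}
    (hg : StrictMono g) (σ : Equiv.Perm (Fin k)) : Tuple.sort (g ∘ σ) = σ⁻¹ := by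
  refine (Tuple.eq_sort_iff.2 ⟨?_, fun i j hij hgij => ?_⟩).symm
  · simpa [Function.comp_def] using hg.monotone
  · simp only [Equiv.Perm.coe_inv, Function.comp_apply, Equiv.apply_symm_apply] at hgij
    exact absurd (hg.injective hgij) hij.ne

theorem StrictMono.prod_filter_lt_image {α β M : Type*} [LinearOrder α] [LinearOrder β]
    [CommMonoid M] {g : β → α} (hg : StrictMono g) (s : Finset β) (F : α × α → M) :
    ∏ p ∈ (s.image g ×ˢ s.image g).filter (fun p => p.1 < p.2), F p
      = ∏ p ∈ (s ×ˢ s).filter (fun p => p.1 < p.2), F (g p.1, g p.2) := by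
  rw [← prodMap_image_product, filter_image, prod_image (hg.injective.prodMap hg.injective).injOn]
  simp only [Prod.map_fst, Prod.map_snd, hg.lt_iff_lt]
  rfl

namespace Finset

theorem prod_Ioi_eq_prod_filter_lt {ι M : Type*} [Fintype ι] [LinearOrder ι]
    [LocallyFiniteOrderTop ι] [CommMonoid M] (f : ι → ι → M) :
    ∏ i, ∏ j ∈ Ioi i, f i j = ∏ p : ι × ι with p.1 < p.2, f p.1 p.2 := by
  rw [prod_filter, Fintype.prod_prod_type]
  refine prod_congr rfl fun i _ => ?_
  rw [← prod_filter]
  congr 1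
  ext j
  simp

variable {α M : Type*} [LinearOrder α] [Fintype α] [AddCommMonoid M] {k : ℕ}

open Classical in
/-- Sorting splits an injective tuple uniquely into a strictly monotone one and a permutation. -/
theorem sum_filter_injective_eq_sum_strictMono_sum_perm (F : (Fin k → α) → M) :
    ∑ f : Fin k → α with f.Injective, F f
      = ∑ g : Fin k → α with StrictMono g, ∑ σ : Equiv.Perm (Fin k), F (g ∘ σ) := by
  rw [← sum_product']
  symm
  refine sum_bij' (fun p _ => p.1 ∘ p.2) (fun f _ => (f ∘ Tuple.sort f, (Tuple.sort f)⁻¹))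
    ?_ ?_ ?_ ?_ (fun _ _ => rfl)
  · rintro ⟨g, σ⟩ hp
    simp only [mem_product, mem_filter_univ] at hp ⊢
    exact hp.1.injective.comp σ.injective
  · intro f hf
    simp only [mem_product, mem_filter_univ, mem_univ, and_true] at hf ⊢
    exact (Tuple.monotone_sort f).strictMono_of_injective (hf.comp (Equiv.injective _))
  · rintro ⟨g, σ⟩ hp
    simp only [mem_product, mem_filter_univ] at hp
    rw [hp.1.sort_comp_perm, inv_inv]
    ext i <;> simp
  · intro f _
    ext i
    simp

open Classical in
theorem sum_strictMono_image_eq_sum_powersetCard (H : Finset α → M) :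
    ∑ g : Fin k → α with StrictMono g, H (univ.image g) = ∑ s ∈ univ.powersetCard k, H s := by
  refine sum_bij (fun g _ => univ.image g) ?_ ?_ ?_ (fun _ _ => rfl)
  · intro g hg
    rw [mem_powersetCard, card_image_of_injective _ ((mem_filter_univ _).1 hg).injective]
    simp
  · intro g₁ hg₁ g₂ hg₂ himage
    have hrange : ∀ g : Fin k → α, Set.range g = ↑(univ.image g) := fun g => by simp
    exact (((mem_filter_univ _).1 hg₁).range_inj ((mem_filter_univ _).1 hg₂)).1
      (by rw [hrange, hrange, himage])
  · intro s hs
    have hcard := (mem_powersetCard.1 hs).2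
    exact ⟨s.orderEmbOfFin hcard, (mem_filter_univ _).2 (s.orderEmbOfFin hcard).strictMono,
      image_orderEmbOfFin_univ s hcard⟩

end Finset

namespace Matrix

variable {R : Type*} [CommRing R]

theorem det_mul_eq_sum_prod_mul_det_submatrix {n m : Type*} [Fintype n] [DecidableEq n]
    [Fintype m] (A : Matrix n m R) (B : Matrix m n R) :
    (A * B).det = ∑ f : n → m, (∏ i, A i (f i)) * (B.submatrix f id).det := by
  have hrows : A * B = fun i => ∑ a, A i a • B a := by
    ext i j
    simp [mul_apply, Finset.sum_apply]
  change detRowAlternating.toMultilinearMap (A * B) = _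
  rw [hrows, MultilinearMap.map_sum]
  refine sum_congr rfl fun f _ => ?_
  rw [MultilinearMap.map_smul_univ, smul_eq_mul]
  rfl

theorem det_submatrix_comp_perm {n m : Type*} [Fintype n] [DecidableEq n] (B : Matrix m n R)
    (g : n → m) (σ : Equiv.Perm n) :
    (B.submatrix (g ∘ σ) id).det = Equiv.Perm.sign σ * (B.submatrix g id).det := by
  rw [← det_permute, submatrix_submatrix, Function.comp_id]

variable {k : ℕ} {m : Type*} [Fintype m] [LinearOrder m]

open Classical in
/-- The Cauchy–Binet formula, summing over the `k`-subsets of `m` as strictly monotone maps. -/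
theorem det_mul_eq_sum_strictMono (A : Matrix (Fin k) m R) (B : Matrix m (Fin k) R) :
    (A * B).det = ∑ g : Fin k → m with StrictMono g,
      (A.submatrix id g).det * (B.submatrix g id).det := by
  have hinj : ∀ f : Fin k → m, (∏ i, A i (f i)) * (B.submatrix f id).det ≠ 0 → f.Injective := by
    intro f hf i j hij
    by_contra hne
    exact hf (by rw [det_zero_of_row_eq hne (by ext; simp [hij]), mul_zero])
  rw [det_mul_eq_sum_prod_mul_det_submatrix, ← sum_filter_of_ne fun f _ => hinj f,
    sum_filter_injective_eq_sum_strictMono_sum_perm]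
  refine sum_congr rfl fun g _ => ?_
  calc ∑ σ : Equiv.Perm (Fin k), (∏ i, A i ((g ∘ σ) i)) * (B.submatrix (g ∘ σ) id).det
      = (∑ σ : Equiv.Perm (Fin k), Equiv.Perm.sign σ * ∏ i, (A.submatrix id g)ᵀ (σ i) i)
          * (B.submatrix g id).det := by
        rw [sum_mul]
        refine sum_congr rfl fun σ _ => ?_
        rw [det_submatrix_comp_perm]
        simp only [Function.comp_apply, transpose_apply, submatrix_apply, id]
        ring
    _ = (A.submatrix id g).det * (B.submatrix g id).det := by rw [← det_apply', det_transpose]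

open Classical in
theorem det_transpose_mul_self_eq_sum_sq (A : Matrix m (Fin k) R) :
    (Aᵀ * A).det = ∑ g : Fin k → m with StrictMono g, (A.submatrix g id).det ^ 2 := by
  rw [det_mul_eq_sum_strictMono]
  refine sum_congr rfl fun g _ => ?_
  rw [← transpose_submatrix, det_transpose, sq]

theorem det_vandermonde_sq (v : Fin k → R) :
    (vandermonde v).det ^ 2 = ∏ p : Fin k × Fin k with p.1 < p.2, (v p.1 - v p.2) ^ 2 := by
  rw [det_vandermonde, ← prod_pow, ← prod_Ioi_eq_prod_filter_lt (fun i j => (v i - v j) ^ 2)]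
  refine prod_congr rfl fun i _ => ?_
  rw [← prod_pow]
  refine prod_congr rfl fun j _ => ?_
  ring

end Matrix

theorem det_bezoutiant_minor_general
    (n k : ℕ) (l : Fin n → ℂ) :
    (Matrix.of fun i j : Fin k => ∑ a : Fin n, l a ^ (i.1 + j.1)).det
      = ∑ s ∈ Finset.univ.powersetCard k,
          ∏ p ∈ (s ×ˢ s).filter (fun p : Fin n × Fin n => p.1 < p.2), (l p.1 - l p.2) ^ 2 := by
  have hgram : (Matrix.of fun i j : Fin k => ∑ a, l a ^ (i.1 + j.1))
      = (Matrix.rectVandermonde l 1 k)ᵀ * Matrix.rectVandermonde l 1 k := by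
    ext i j
    simp [Matrix.mul_apply, Matrix.rectVandermonde_apply, pow_add]
  have hsquare : ∀ g : Fin k → Fin n,
      (Matrix.rectVandermonde l 1 k).submatrix g id = Matrix.vandermonde (l ∘ g) :=
    fun g => by rw [Matrix.vandermonde_eq_projVandermonde]; rfl
  rw [hgram, Matrix.det_transpose_mul_self_eq_sum_sq, ← sum_strictMono_image_eq_sum_powersetCard]
  refine sum_congr rfl fun g hg => ?_
  rw [hsquare, Matrix.det_vandermonde_sq, ((mem_filter_univ _).1 hg).prod_filter_lt_image,
    univ_product_univ]
  rfl

/-- The determinant of the `k×k` leading principal minor `B_k = (s_{i+j-2})_{1≤i,j≤k}`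
of the Bezoutiant (with `s_m = ∑_a λ_a^m`, so `s_0 = n`) equals
`∑_{i₁<⋯<i_k} ∏_{a<b} (λ_{i_a} − λ_{i_b})²`, the sum being over `k`-element subsets. -/
theorem det_bezoutiant_minor
    (n k : ℕ) (hk : k ≤ n) (l : Fin n → ℂ) :
    (Matrix.of fun i j : Fin k => ∑ a : Fin n, l a ^ (i.1 + j.1)).det
      = ∑ s ∈ Finset.univ.powersetCard k,
          ∏ p ∈ (s ×ˢ s).filter (fun p : Fin n × Fin n => p.1 < p.2), (l p.1 - l p.2) ^ 2 :=
  det_bezoutiant_minor_general n k l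
end

section
/- Conversely, let P(z) = z^n + ∑_{j=1}^n (−1)^j a_j z^{n−j} be a monic polynomial with real coefficients such that the Bezoutiant matrix B̃(P) = (s_{i+j−2})_{1≤i,j≤n} formed from the power sums of the roots of P is positive semidefinite. Then all roots of P are real. -/
/-!
Suppose `z` is a non-real root of `P`. Then `P = Q ^ m * R` with `Q = (X - z)(X - z̄)` real,
`m ≥ 1` and `R(z) ≠ 0`. Since `1, z` span `ℂ` over `ℝ`, some real linear `L` has `L(z) R(z) = i`.
The real polynomial `q = L R` has degree `< n`, vanishes at the roots of `R` and takes the values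
`i` and `-i` at `z` and `z̄`, so the quadratic form of `B̃(P)` at the coefficient vector of `q` is
`Re ∑_w q(w)^2 = m (i^2 + (-i)^2) = -2m < 0`.
-/

open Polynomial ComplexConjugate Matrix

def powerSumHankel (S : Multiset ℂ) (n : ℕ) : Matrix (Fin n) (Fin n) ℝ :=
  Matrix.of fun i j => ((S.map fun z => z ^ (i.1 + j.1)).sum).re

theorem Multiset.sum_map_sq_sum_mul_pow (S : Multiset ℂ) {n : ℕ} (c : Fin n → ℂ) :
    (S.map fun w => (∑ i, c i * w ^ i.1) ^ 2).sum =
      ∑ i, ∑ j, c i * c j * (S.map fun w => w ^ (i.1 + j.1)).sum := by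
  simp only [sq, Finset.sum_mul_sum, Multiset.sum_map_sum, ← Multiset.sum_map_mul_left]
  refine Finset.sum_congr rfl fun i _ => Finset.sum_congr rfl fun j _ => ?_
  exact congrArg _ (Multiset.map_congr rfl fun w _ => by ring)

theorem dotProduct_powerSumHankel_mulVec (S : Multiset ℂ) {n : ℕ} {q : ℝ[X]}
    (hq : q.natDegree < n) :
    (fun i : Fin n => q.coeff i) ⬝ᵥ powerSumHankel S n *ᵥ (fun i => q.coeff i) =
      ((S.map fun w => aeval w q ^ 2).sum).re := by
  have haeval (w : ℂ) : aeval w q = ∑ i : Fin n, (q.coeff i : ℂ) * w ^ i.1 := by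
    rw [aeval_eq_sum_range' hq, ← Fin.sum_univ_eq_sum_range (fun i => q.coeff i • w ^ i)]
    simp [Complex.real_smul]
  simp only [haeval, Multiset.sum_map_sq_sum_mul_pow, Complex.re_sum, ← Complex.ofReal_mul,
    Complex.re_ofReal_mul, dotProduct, mulVec, powerSumHankel, of_apply, Finset.mul_sum]
  exact Finset.sum_congr rfl fun i _ => Finset.sum_congr rfl fun j _ => by ring

noncomputable def conjPairQuadratic (z : ℂ) : ℝ[X] := X ^ 2 - C (2 * z.re) * X + C (‖z‖ ^ 2)

theorem conjPairQuadratic_monic (z : ℂ) : (conjPairQuadratic z).Monic := by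
  unfold conjPairQuadratic; monicity!

theorem conjPairQuadratic_natDegree (z : ℂ) : (conjPairQuadratic z).natDegree = 2 := by
  unfold conjPairQuadratic; compute_degree!

theorem map_conjPairQuadratic (z : ℂ) :
    (conjPairQuadratic z).map (algebraMap ℝ ℂ) = (X - C (conj z)) * (X - C z) := by
  have hsum : algebraMap ℝ ℂ (2 * z.re) = conj z + z := by simp [add_comm, Complex.add_conj]
  have hprod : algebraMap ℝ ℂ (‖z‖ ^ 2) = conj z * z := by simp [mul_comm, Complex.mul_conj']
  rw [conjPairQuadratic, Polynomial.map_add, Polynomial.map_sub, Polynomial.map_mul,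
    Polynomial.map_pow, map_X, map_C, map_C, hsum, hprod, C_add, C_mul]
  ring

theorem roots_map_conjPairQuadratic_pow_mul {R : ℝ[X]} (hR : R ≠ 0) (z : ℂ) (m : ℕ) :
    ((conjPairQuadratic z ^ m * R).map (algebraMap ℝ ℂ)).roots =
      m • ({conj z} + {z}) + (R.map (algebraMap ℝ ℂ)).roots := by
  have hQ : (X - C (conj z)) * (X - C z) ≠ 0 := mul_ne_zero (X_sub_C_ne_zero _) (X_sub_C_ne_zero _)
  rw [Polynomial.map_mul, Polynomial.map_pow, map_conjPairQuadratic,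
    roots_mul (mul_ne_zero (pow_ne_zero _ hQ) (map_ne_zero hR)), roots_pow, roots_mul hQ,
    roots_X_sub_C, roots_X_sub_C]

theorem sum_roots_map_aeval_sq {R q : ℝ[X]} (hR : R ≠ 0) (hRq : R ∣ q) (z : ℂ) (m : ℕ) :
    (((conjPairQuadratic z ^ m * R).map (algebraMap ℝ ℂ)).roots.map fun w => aeval w q ^ 2).sum =
      m * (conj (aeval z q) ^ 2 + aeval z q ^ 2) := by
  have hvanish : ((R.map (algebraMap ℝ ℂ)).roots.map fun w => aeval w q ^ 2).sum = 0 := by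
    refine Multiset.sum_eq_zero fun _ hmem => ?_
    obtain ⟨w, hw, rfl⟩ := Multiset.mem_map.1 hmem
    rw [mem_roots_map hR, ← aeval_def] at hw
    obtain ⟨S, rfl⟩ := hRq
    simp [hw]
  rw [roots_map_conjPairQuadratic_pow_mul hR, Multiset.map_add, Multiset.sum_add, hvanish,
    Multiset.map_nsmul, Multiset.sum_nsmul]
  simp [aeval_conj, mul_add]

theorem exists_eq_conjPairQuadratic_pow_mul {P : ℝ[X]} (hP : P ≠ 0) {z : ℂ} (hPz : aeval z P = 0)
    (hz : z.im ≠ 0) : ∃ m R, 0 < m ∧ P = conjPairQuadratic z ^ m * R ∧ aeval z R ≠ 0 := by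
  have hdeg : 0 < (conjPairQuadratic z).degree := by
    rw [degree_eq_natDegree (conjPairQuadratic_monic z).ne_zero, conjPairQuadratic_natDegree]
    norm_num
  obtain ⟨R, hPR, hR⟩ := (finiteMultiplicity_of_degree_pos_of_monic hdeg
    (conjPairQuadratic_monic z) hP).exists_eq_pow_mul_and_not_dvd
  refine ⟨_, R, Nat.pos_of_ne_zero (multiplicity_ne_zero.2
    (quadratic_dvd_of_aeval_eq_zero_im_ne_zero P hPz hz)), hPR, fun hRz => hR ?_⟩
  exact quadratic_dvd_of_aeval_eq_zero_im_ne_zero R hRz hz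

theorem exists_aeval_eq_of_im_ne_zero {z : ℂ} (hz : z.im ≠ 0) (w : ℂ) :
    ∃ L : ℝ[X], L.natDegree ≤ 1 ∧ aeval z L = w := by
  refine ⟨C (w.im / z.im) * X + C (w.re - w.im / z.im * z.re), natDegree_linear_le, ?_⟩
  exact Complex.ext (by simp) (by simp [hz])

theorem hyperbolic_of_bezoutiant_posSemidef_general
    (n : ℕ) (P : Polynomial ℝ) (hdeg : P.natDegree = n)
    (hpsd : Matrix.PosSemidef (Matrix.of fun i j : Fin n =>
      (((P.map (algebraMap ℝ ℂ)).roots.map (fun z => z ^ (i.1 + j.1))).sum).re)) :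
    ∀ z ∈ (P.map (algebraMap ℝ ℂ)).roots, z.im = 0 := by
  change (powerSumHankel _ n).PosSemidef at hpsd
  intro z hz
  by_contra him
  have hP : P ≠ 0 := by rintro rfl; simp at hz
  have hPz : aeval z P = 0 := by rwa [mem_roots_map hP, ← aeval_def] at hz
  obtain ⟨m, R, hm, rfl, hRz⟩ := exists_eq_conjPairQuadratic_pow_mul hP hPz him
  have hR : R ≠ 0 := right_ne_zero_of_mul hP
  obtain ⟨L, hL, hLz⟩ := exists_aeval_eq_of_im_ne_zero him (Complex.I / aeval z R)
  have hqz : aeval z (L * R) = Complex.I := by rw [aeval_mul, hLz, div_mul_cancel₀ _ hRz]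
  have hqdeg : (L * R).natDegree < n := by
    have hLR := natDegree_mul_le (p := L) (q := R)
    rw [← hdeg, natDegree_mul ((conjPairQuadratic_monic z).pow m).ne_zero hR, natDegree_pow,
      conjPairQuadratic_natDegree]
    omega
  have hform := hpsd.dotProduct_mulVec_nonneg fun i => (L * R).coeff i
  rw [star_trivial, dotProduct_powerSumHankel_mulVec _ hqdeg,
    sum_roots_map_aeval_sq hR (dvd_mul_left R L), hqz] at hform
  norm_num at hform
  linarith [(Nat.cast_pos.2 hm : (0 : ℝ) < m)]

/-- Conversely: if the Bezoutiant matrix `B̃(P) = (s_{i+j-2})_{1≤i,j≤n}` formed from the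
power sums of the roots of a monic real polynomial `P` of degree `n` is positive
semidefinite, then all roots of `P` are real. -/
theorem hyperbolic_of_bezoutiant_posSemidef
    (n : ℕ) (P : Polynomial ℝ) (hmonic : P.Monic) (hdeg : P.natDegree = n)
    (hpsd : Matrix.PosSemidef (Matrix.of fun i j : Fin n =>
      (((P.map (algebraMap ℝ ℂ)).roots.map (fun z => z ^ (i.1 + j.1))).sum).re)) :
    ∀ z ∈ (P.map (algebraMap ℝ ℂ)).roots, z.im = 0 :=
  hyperbolic_of_bezoutiant_posSemidef_general n P hdeg hpsd
end

section
/- Let f_1, f_2, g be real-analytic functions on a connected neighborhood U of 0 ∈ ℝ^q with g nowhere vanishing, and suppose f_1(x)·f_2(x) = x^α g(x) on U for some α ∈ ℕ^q. Then each factor is a normal crossings: there exist β, γ ∈ ℕ^q with β + γ = α and nowhere-vanishing real-analytic functions g_1, g_2 on a possibly smaller neighborhood of 0 such that f_1(x) = x^β g_1(x) and f_2(x) = x^γ g_2(x). -/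
/-!
Induction on `α`. If `α i ≠ 0`, the product `f₁ f₂` vanishes on the hyperplane `x i = 0`;
analytic functions on a ball form an integral domain, so one factor, say `f₁`, vanishes there.
A power-series form of Hadamard's lemma gives `f₁(x) - f₁(x with x i = 0) = x i * h x` with `h`
analytic, hence `f₁ = x i * h`. Cancelling `x i` off the hyperplane and extending by continuity,
`h f₂ = x^(α - eᵢ) g`, and the induction hypothesis applies to `h` and `f₂`.
-/

open Filter Topology

section General

variable {𝕜 : Type*} [NontriviallyNormedField 𝕜] {E F : Type*} [NormedAddCommGroup E]
  [NormedSpace 𝕜 E] [NormedAddCommGroup F] [NormedSpace 𝕜 F]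

namespace ContinuousMultilinearMap

/-- Telescoping `P (y, …, y) - P (π y, …, π y)` by switching one slot at a time from `y` to `π y`,
the `k`-th difference has `y - π y` in slot `k`; when `y - π y = c • e` this is `c` times the
`k`-th summand below evaluated at `(y, …, y)`. -/
noncomputable def diffQuotient {n : ℕ} (P : E [×(n + 1)]→L[𝕜] F) (π : E →L[𝕜] E) (e : E) :
    E [×n]→L[𝕜] F :=
  ∑ k : Fin (n + 1), (P.compContinuousLinearMap fun j =>
    if j ≤ k then ContinuousLinearMap.id 𝕜 E else π).curryMid k e

theorem diffQuotient_apply_const {n : ℕ} (P : E [×(n + 1)]→L[𝕜] F) (π : E →L[𝕜] E) (e y : E) :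
    P.diffQuotient π e (fun _ => y) =
      ∑ k : Fin (n + 1), P (fun j => if j < k then y else if k = j then e else π y) := by
  simp only [diffQuotient, _root_.sum_apply, curryMid_apply, compContinuousLinearMap_apply]
  refine Finset.sum_congr rfl fun k _ => congrArg P (funext fun j => ?_)
  change (if j ≤ k then ContinuousLinearMap.id 𝕜 E else π)
    (k.insertNth e (Fin.removeNth k fun _ => y) j) = _
  rw [Fin.insertNth_removeNth]
  rcases lt_trichotomy j k with h | rfl | h
  · simp [h, h.le, h.ne]
  · simp
  · simp [h.not_gt, h.not_ge, h.ne, h.ne']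

theorem apply_const_sub_apply_const {n : ℕ} (P : E [×(n + 1)]→L[𝕜] F) (π : E →L[𝕜] E) (e y : E)
    (c : 𝕜) (hy : y - π y = c • e) :
    P (fun _ => y) - P (fun _ => π y) = c • P.diffQuotient π e (fun _ => y) := by
  classical
  have h : P (fun _ => y) - P (fun _ => π y) =
      ∑ k, P (fun j => if j < k then y else if k = j then y - π y else π y) := by
    simpa using P.toMultilinearMap.map_sub_map_piecewise (fun _ => y) (fun _ => π y) Finset.univ
  rw [h, diffQuotient_apply_const, Finset.smul_sum]
  refine Finset.sum_congr rfl fun k _ => ?_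
  set w : Fin (n + 1) → E := fun j => if j < k then y else if k = j then e else π y
  have hw : (fun j => if j < k then y else if k = j then y - π y else π y) =
      Function.update w k (c • e) := by
    funext j
    rcases eq_or_ne j k with rfl | h
    · simp [hy]
    · simp [w, h, Ne.symm h]
  rw [hw, P.map_update_smul, Function.update_eq_self_iff.2 (by simp [w])]

theorem norm_diffQuotient_le {n : ℕ} (P : E [×(n + 1)]→L[𝕜] F) {π : E →L[𝕜] E} (hπ : ‖π‖ ≤ 1)
    (e : E) : ‖P.diffQuotient π e‖ ≤ (n + 1) * ‖P‖ * ‖e‖ := by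
  have hterm : ∀ k : Fin (n + 1), ‖(P.compContinuousLinearMap fun j =>
      if j ≤ k then ContinuousLinearMap.id 𝕜 E else π).curryMid k e‖ ≤ ‖P‖ * ‖e‖ := by
    intro k
    refine ((ContinuousLinearMap.le_opNorm _ e).trans ?_)
    rw [norm_curryMid]
    gcongr
    refine (norm_compContinuousLinearMap_le _ _).trans (mul_le_of_le_one_right (norm_nonneg _) ?_)
    refine Finset.prod_le_one (fun _ _ => norm_nonneg _) fun j _ => ?_
    split
    · exact ContinuousLinearMap.norm_id_le
    · exact hπ
  calc ‖P.diffQuotient π e‖ ≤ ∑ k : Fin (n + 1), ‖P‖ * ‖e‖ :=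
        (norm_sum_le _ _).trans (Finset.sum_le_sum fun k _ => hterm k)
    _ = (n + 1) * ‖P‖ * ‖e‖ := by simp [mul_assoc]

end ContinuousMultilinearMap

namespace FormalMultilinearSeries

open scoped NNReal

theorem radius_pos_of_norm_le_succ_mul {p Q : FormalMultilinearSeries 𝕜 E F} {C : ℝ} (hC : 0 ≤ C)
    (hp : 0 < p.radius) (hQ : ∀ n, ‖Q n‖ ≤ (n + 1) * ‖p (n + 1)‖ * C) : 0 < Q.radius := by
  obtain ⟨t, ht0, htp⟩ := ENNReal.lt_iff_exists_nnreal_btwn.1 hp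
  obtain ⟨D, -, hD⟩ := p.norm_mul_pow_le_of_lt_radius htp
  have ht : (0 : ℝ) < t := by exact_mod_cast ht0
  refine lt_of_lt_of_le (ENNReal.coe_pos.2 (half_pos (ENNReal.coe_pos.1 ht0)))
    (Q.le_radius_of_bound (2 * D * (C / t)) (r := t / 2) fun n => ?_)
  have hn : ((n : ℝ) + 1) / 2 ^ n ≤ 2 := by
    rw [div_le_iff₀ (by positivity), ← pow_succ']
    exact_mod_cast (Nat.lt_two_pow_self (n := n + 1)).le
  calc ‖Q n‖ * ((t / 2 : ℝ≥0) : ℝ) ^ n ≤ (n + 1) * ‖p (n + 1)‖ * C * ((t : ℝ) / 2) ^ n := by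
        push_cast; gcongr; exact hQ n
    _ = ((n + 1) / 2 ^ n) * (‖p (n + 1)‖ * (t : ℝ) ^ (n + 1)) * (C / t) := by
        rw [div_pow, pow_succ]; field_simp
    _ ≤ 2 * D * (C / t) := by gcongr; exact hD (n + 1)

noncomputable def diffQuotient (p : FormalMultilinearSeries 𝕜 E F) (π : E →L[𝕜] E) (e : E) :
    FormalMultilinearSeries 𝕜 E F :=
  fun n => (p (n + 1)).diffQuotient π e

theorem radius_diffQuotient_pos {p : FormalMultilinearSeries 𝕜 E F} (hp : 0 < p.radius)
    {π : E →L[𝕜] E} (hπ : ‖π‖ ≤ 1) (e : E) : 0 < (p.diffQuotient π e).radius :=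
  radius_pos_of_norm_le_succ_mul (norm_nonneg e) hp fun n =>
    by exact_mod_cast (p (n + 1)).norm_diffQuotient_le hπ e

end FormalMultilinearSeries

theorem AnalyticAt.exists_sub_comp_eq_smul [CompleteSpace F] {f : E → F} (hf : AnalyticAt 𝕜 f 0)
    {π : E →L[𝕜] E} (hπ : ‖π‖ ≤ 1) (ℓ : E → 𝕜) (e : E) (hℓ : ∀ y, y - π y = ℓ y • e) :
    ∃ h : E → F, AnalyticAt 𝕜 h 0 ∧ ∀ᶠ y in 𝓝 0, f y - f (π y) = ℓ y • h y := by
  obtain ⟨p, r, hp⟩ := hf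
  set Q := p.diffQuotient π e
  have hQ : 0 < Q.radius := FormalMultilinearSeries.radius_diffQuotient_pos hp.radius_pos hπ e
  refine ⟨Q.sum, (Q.hasFPowerSeriesOnBall hQ).analyticAt, ?_⟩
  filter_upwards [Metric.eball_mem_nhds 0 hp.r_pos, Metric.eball_mem_nhds 0 hQ] with y hyr hyQ
  have hπy : π y ∈ Metric.eball 0 r := by
    rw [mem_eball_zero_iff] at hyr ⊢
    have : ‖π y‖ ≤ ‖y‖ := (π.le_of_opNorm_le hπ y).trans_eq (one_mul _)
    exact lt_of_le_of_lt (enorm_le_iff_norm_le.2 this) hyr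
  have hdiff := (hp.hasSum hyr).sub (hp.hasSum hπy)
  rw [zero_add, zero_add] at hdiff
  have hQy := (Q.hasSum hyQ).const_smul (ℓ y)
  have hterm : ∀ n, ℓ y • Q n (fun _ => y) = p (n + 1) (fun _ => y) - p (n + 1) (fun _ => π y) :=
    fun n => ((p (n + 1)).apply_const_sub_apply_const π e y (ℓ y) (hℓ y)).symm
  simp only [hterm] at hQy
  refine hdiff.unique ((hasSum_nat_add_iff' 1).1 ?_)
  simpa [Subsingleton.elim (fun _ : Fin 0 => y) (fun _ => π y)] using hQy

theorem eqOn_zero_or_eqOn_zero_of_mul_eq_zero {f g : E → 𝕜} {U : Set E} (hU : IsOpen U)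
    (hU' : IsPreconnected U) (hf : ContinuousOn f U) (hg : AnalyticOnNhd 𝕜 g U)
    (hfg : ∀ x ∈ U, f x * g x = 0) : Set.EqOn f 0 U ∨ Set.EqOn g 0 U := by
  refine or_iff_not_imp_left.2 fun hf0 => ?_
  obtain ⟨z, hz, hfz⟩ := not_forall₂.1 hf0
  refine hg.eqOn_zero_of_preconnected_of_eventuallyEq_zero hU' hz ?_
  filter_upwards [hU.mem_nhds hz, (hf.continuousAt (hU.mem_nhds hz)).eventually_ne hfz]
    with x hxU hfx
  exact (mul_eq_zero.1 (hfg x hxU)).resolve_left hfx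

theorem eventuallyEq_of_mul_eventuallyEq {X K : Type*} [TopologicalSpace X] [TopologicalSpace K]
    [T2Space K] [MonoidWithZero K] [IsLeftCancelMulZero K] {c φ ψ : X → K} {x₀ : X}
    (hc : Dense {x | c x ≠ 0})
    (hφ : ∀ᶠ x in 𝓝 x₀, ContinuousAt φ x) (hψ : ∀ᶠ x in 𝓝 x₀, ContinuousAt ψ x)
    (h : ∀ᶠ x in 𝓝 x₀, c x * φ x = c x * ψ x) : φ =ᶠ[𝓝 x₀] ψ := by
  obtain ⟨t, ht, hto, hx₀⟩ := eventually_nhds_iff.1 (hφ.and (hψ.and h))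
  have hcont : ∀ {χ : X → K}, (∀ x ∈ t, ContinuousAt χ x) → ContinuousOn χ t :=
    fun hχ x hx => (hχ x hx).continuousWithinAt
  have heq : Set.EqOn φ ψ t :=
    Set.EqOn.of_subset_closure (fun x hx => mul_left_cancel₀ hx.2 (ht x hx.1).2.2)
      (hcont fun x hx => (ht x hx).1) (hcont fun x hx => (ht x hx).2.1) Set.inter_subset_left
      (hc.open_subset_closure_inter hto)
  exact Filter.eventually_of_mem (hto.mem_nhds hx₀) heq

section Coordinates

theorem dense_setOf_apply_ne_zero {ι : Type*} (i : ι) : Dense {x : ι → 𝕜 | x i ≠ 0} :=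
  (dense_compl_singleton (0 : 𝕜)).preimage (isOpenMap_eval i)

variable {ι : Type*} [DecidableEq ι]

noncomputable def hyperplaneProj (i : ι) : (ι → 𝕜) →L[𝕜] (ι → 𝕜) :=
  ContinuousLinearMap.id 𝕜 _ - (ContinuousLinearMap.proj i).smulRight (Pi.single i 1)

theorem sub_hyperplaneProj_apply (i : ι) (x : ι → 𝕜) :
    x - hyperplaneProj i x = x i • Pi.single i 1 := by
  simp [hyperplaneProj]

theorem hyperplaneProj_apply (i : ι) (x : ι → 𝕜) :
    hyperplaneProj i x = Function.update x i 0 := by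
  funext j
  rcases eq_or_ne j i with rfl | h
  · simp [hyperplaneProj]
  · simp [hyperplaneProj, h]

theorem norm_hyperplaneProj_le [Fintype ι] (i : ι) : ‖hyperplaneProj (𝕜 := 𝕜) i‖ ≤ 1 := by
  refine ContinuousLinearMap.opNorm_le_bound _ zero_le_one fun x => ?_
  rw [one_mul, hyperplaneProj_apply]
  refine (pi_norm_le_iff_of_nonneg (norm_nonneg x)).2 fun j => ?_
  rcases eq_or_ne j i with rfl | h
  · simp
  · simpa [h] using norm_le_pi_norm x j

theorem prod_pow_add_single [Fintype ι] {M : Type*} [CommMonoid M] (x : ι → M) (α : ι → ℕ)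
    (i : ι) :
    ∏ j, x j ^ (α + Pi.single i 1 : ι → ℕ) j = x i * ∏ j, x j ^ α j := by
  simp only [Pi.add_apply, pow_add, Finset.prod_mul_distrib, mul_comm (∏ j, x j ^ α j)]
  simp [Pi.single_apply]

end Coordinates

end General

section NormalCrossings

variable {𝕜 : Type*} [RCLike 𝕜] {q : ℕ}

def IsNormalCrossings (f : (Fin q → 𝕜) → 𝕜) (β : Fin q → ℕ) : Prop :=
  ∃ u : (Fin q → 𝕜) → 𝕜, AnalyticAt 𝕜 u 0 ∧ u 0 ≠ 0 ∧ f =ᶠ[𝓝 0] fun x => (∏ i, x i ^ β i) * u x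

theorem AnalyticAt.isNormalCrossings_zero {f : (Fin q → 𝕜) → 𝕜} (hf : AnalyticAt 𝕜 f 0)
    (hf0 : f 0 ≠ 0) : IsNormalCrossings f 0 :=
  ⟨f, hf, hf0, by simp⟩

theorem IsNormalCrossings.coord_mul {f h : (Fin q → 𝕜) → 𝕜} {β : Fin q → ℕ} {i : Fin q}
    (hh : IsNormalCrossings h β) (hf : f =ᶠ[𝓝 0] fun x => x i * h x) :
    IsNormalCrossings f (β + Pi.single i 1) := by
  obtain ⟨u, hu, hu0, hhu⟩ := hh
  refine ⟨u, hu, hu0, ?_⟩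
  filter_upwards [hf, hhu] with x hfx hhx
  rw [hfx, hhx, prod_pow_add_single, mul_assoc]

theorem eventually_comp_hyperplaneProj_eq_zero_or {f₁ f₂ g : (Fin q → 𝕜) → 𝕜}
    {α : Fin q → ℕ} {i : Fin q} (hi : α i ≠ 0) (hf₁ : AnalyticAt 𝕜 f₁ 0)
    (hf₂ : AnalyticAt 𝕜 f₂ 0) (heq : ∀ᶠ x in 𝓝 0, f₁ x * f₂ x = (∏ j, x j ^ α j) * g x) :
    (∀ᶠ x in 𝓝 0, f₁ (hyperplaneProj i x) = 0) ∨ (∀ᶠ x in 𝓝 0, f₂ (hyperplaneProj i x) = 0) := by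
  obtain ⟨R, hR, hball⟩ := Metric.eventually_nhds_iff_ball.1
    (hf₁.eventually_analyticAt.and (hf₂.eventually_analyticAt.and heq))
  set π : (Fin q → 𝕜) →L[𝕜] (Fin q → 𝕜) := hyperplaneProj i
  have hπ : ∀ x ∈ Metric.ball (0 : Fin q → 𝕜) R, π x ∈ Metric.ball 0 R := fun x hx => by
    rw [mem_ball_zero_iff] at hx ⊢
    exact ((π.le_of_opNorm_le (norm_hyperplaneProj_le i) x).trans_eq (one_mul _)).trans_lt hx
  have han₁ : AnalyticOnNhd 𝕜 (f₁ ∘ π) (Metric.ball 0 R) :=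
    fun x hx => (hball _ (hπ x hx)).1.comp (π.analyticAt x)
  have han₂ : AnalyticOnNhd 𝕜 (f₂ ∘ π) (Metric.ball 0 R) :=
    fun x hx => (hball _ (hπ x hx)).2.1.comp (π.analyticAt x)
  have hprod : ∀ x ∈ Metric.ball (0 : Fin q → 𝕜) R, (f₁ ∘ π) x * (f₂ ∘ π) x = 0 := by
    intro x hx
    have hmono : ∏ j, π x j ^ α j = 0 :=
      Finset.prod_eq_zero (Finset.mem_univ i) (by simp [π, hyperplaneProj_apply, hi])
    simpa [hmono] using (hball _ (hπ x hx)).2.2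
  refine (eqOn_zero_or_eqOn_zero_of_mul_eq_zero Metric.isOpen_ball
    (convex_ball 0 R).isPreconnected han₁.continuousOn han₂ hprod).imp ?_ ?_ <;>
  exact fun h => Filter.eventually_of_mem (Metric.ball_mem_nhds 0 hR) h

theorem exists_isNormalCrossings_of_comp_hyperplaneProj_eq_zero {f₁ f₂ g : (Fin q → 𝕜) → 𝕜}
    {α : Fin q → ℕ} {i : Fin q}
    (ih : ∀ h₁ h₂ : (Fin q → 𝕜) → 𝕜, AnalyticAt 𝕜 h₁ 0 → AnalyticAt 𝕜 h₂ 0 →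
      (∀ᶠ x in 𝓝 0, h₁ x * h₂ x = (∏ j, x j ^ α j) * g x) →
      ∃ β γ, β + γ = α ∧ IsNormalCrossings h₁ β ∧ IsNormalCrossings h₂ γ)
    (hf₁ : AnalyticAt 𝕜 f₁ 0) (hf₂ : AnalyticAt 𝕜 f₂ 0) (hg : AnalyticAt 𝕜 g 0)
    (hvan : ∀ᶠ x in 𝓝 0, f₁ (hyperplaneProj i x) = 0)
    (heq : ∀ᶠ x in 𝓝 0, f₁ x * f₂ x = (∏ j, x j ^ (α + Pi.single i 1 : Fin q → ℕ) j) * g x) :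
    ∃ β γ, β + γ = α + Pi.single i 1 ∧ IsNormalCrossings f₁ β ∧ IsNormalCrossings f₂ γ := by
  obtain ⟨h, hh, hdiv⟩ := hf₁.exists_sub_comp_eq_smul (norm_hyperplaneProj_le i) (fun x => x i)
    (Pi.single i 1) (sub_hyperplaneProj_apply i)
  have hf₁h : f₁ =ᶠ[𝓝 0] fun x => x i * h x := by
    filter_upwards [hdiv, hvan] with x hx hx0
    rwa [hx0, sub_zero] at hx
  have hmono : AnalyticAt 𝕜 (fun x : Fin q → 𝕜 => ∏ j, x j ^ α j) 0 :=
    Finset.analyticAt_fun_prod _ fun j _ =>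
      ((ContinuousLinearMap.proj (R := 𝕜) (φ := fun _ : Fin q => 𝕜) j).analyticAt 0).fun_pow _
  have hcancel : ∀ᶠ x in 𝓝 0, h x * f₂ x = (∏ j, x j ^ α j) * g x := by
    refine eventuallyEq_of_mul_eventuallyEq (dense_setOf_apply_ne_zero i)
      ((hh.mul hf₂).eventually_analyticAt.mono fun x hx => hx.continuousAt)
      ((hmono.mul hg).eventually_analyticAt.mono fun x hx => hx.continuousAt) ?_
    filter_upwards [hf₁h, heq] with x hx hxeq
    rw [hx, prod_pow_add_single] at hxeq
    linear_combination hxeq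
  obtain ⟨β, γ, hβγ, hβ, hγ⟩ := ih h f₂ hh hf₂ hcancel
  exact ⟨β + Pi.single i 1, γ, by rw [← hβγ, add_right_comm], hβ.coord_mul hf₁h, hγ⟩

theorem exists_isNormalCrossings_of_mul_eq (α : Fin q → ℕ) {f₁ f₂ g : (Fin q → 𝕜) → 𝕜}
    (hf₁ : AnalyticAt 𝕜 f₁ 0) (hf₂ : AnalyticAt 𝕜 f₂ 0) (hg : AnalyticAt 𝕜 g 0) (hg0 : g 0 ≠ 0)
    (heq : ∀ᶠ x in 𝓝 0, f₁ x * f₂ x = (∏ i, x i ^ α i) * g x) :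
    ∃ β γ, β + γ = α ∧ IsNormalCrossings f₁ β ∧ IsNormalCrossings f₂ γ := by
  induction α using WellFoundedLT.induction generalizing f₁ f₂ with
  | ind α ih => ?_
  rcases eq_or_ne α 0 with rfl | hα0
  · have h0 : f₁ 0 * f₂ 0 = g 0 := by simpa using heq.self_of_nhds
    exact ⟨0, 0, add_zero 0, hf₁.isNormalCrossings_zero (left_ne_zero_of_mul (h0 ▸ hg0)),
      hf₂.isNormalCrossings_zero (right_ne_zero_of_mul (h0 ▸ hg0))⟩
  obtain ⟨i, hi⟩ : ∃ i, α i ≠ 0 := Function.ne_iff.1 hα0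
  have hvan := eventually_comp_hyperplaneProj_eq_zero_or hi hf₁ hf₂ heq
  set α' := α - Pi.single i 1
  have hα : α = α' + Pi.single i 1 := by
    funext j
    rcases eq_or_ne j i with rfl | h
    · simp [α']
      omega
    · simp [α', h]
  have ih' := fun h₁ h₂ => ih α' (hα ▸ lt_add_of_pos_right α' (Pi.single_pos.2 one_pos))
    (f₁ := h₁) (f₂ := h₂)
  rw [hα] at heq ⊢
  rcases hvan with hvan | hvan
  · exact exists_isNormalCrossings_of_comp_hyperplaneProj_eq_zero ih' hf₁ hf₂ hg hvan heq
  · obtain ⟨γ, β, hγβ, hγ, hβ⟩ := exists_isNormalCrossings_of_comp_hyperplaneProj_eq_zero ih'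
      hf₂ hf₁ hg hvan (by simpa only [mul_comm (f₂ _)] using heq)
    exact ⟨β, γ, by rw [add_comm, hγβ], hβ, hγ⟩

end NormalCrossings

theorem normal_crossings_factors_general
    (q : ℕ) (U : Set (Fin q → ℝ)) (hUopen : IsOpen U) (hU0 : (0 : Fin q → ℝ) ∈ U)
    (f₁ f₂ g : (Fin q → ℝ) → ℝ) (α : Fin q → ℕ)
    (hf₁ : AnalyticOnNhd ℝ f₁ U) (hf₂ : AnalyticOnNhd ℝ f₂ U) (hg : AnalyticOnNhd ℝ g U)
    (hg0 : ∀ x ∈ U, g x ≠ 0)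
    (heq : ∀ x ∈ U, f₁ x * f₂ x = (∏ i, x i ^ α i) * g x) :
    ∃ β γ : Fin q → ℕ, (∀ i, β i + γ i = α i) ∧
      ∃ V : Set (Fin q → ℝ), IsOpen V ∧ (0 : Fin q → ℝ) ∈ V ∧ V ⊆ U ∧
        ∃ g₁ g₂ : (Fin q → ℝ) → ℝ,
          AnalyticOnNhd ℝ g₁ V ∧ AnalyticOnNhd ℝ g₂ V ∧
          (∀ x ∈ V, g₁ x ≠ 0) ∧ (∀ x ∈ V, g₂ x ≠ 0) ∧
          (∀ x ∈ V, f₁ x = (∏ i, x i ^ β i) * g₁ x) ∧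
          (∀ x ∈ V, f₂ x = (∏ i, x i ^ γ i) * g₂ x) := by
  have hU : ∀ᶠ x in 𝓝 0, x ∈ U := hUopen.mem_nhds hU0
  obtain ⟨β, γ, hβγ, ⟨u₁, hu₁, hu₁0, hf₁u⟩, ⟨u₂, hu₂, hu₂0, hf₂u⟩⟩ :=
    exists_isNormalCrossings_of_mul_eq α (hf₁ 0 hU0) (hf₂ 0 hU0) (hg 0 hU0) (hg0 0 hU0)
      (hU.mono heq)
  obtain ⟨V, hV, hVopen, h0V⟩ := eventually_nhds_iff.1 <|
    hU.and <| hu₁.eventually_analyticAt.and <| hu₂.eventually_analyticAt.and <|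
      (hu₁.continuousAt.eventually_ne hu₁0).and <| (hu₂.continuousAt.eventually_ne hu₂0).and <|
        hf₁u.and hf₂u
  simp only [imp_and, forall_and] at hV
  obtain ⟨hVU, hu₁V, hu₂V, hu₁V0, hu₂V0, hf₁V, hf₂V⟩ := hV
  exact ⟨β, γ, congrFun hβγ, V, hVopen, h0V, hVU, u₁, u₂, hu₁V, hu₂V, hu₁V0, hu₂V0, hf₁V, hf₂V⟩

/-- If a product of two real-analytic functions on a connected neighborhood of `0 ∈ ℝ^q`
is a normal crossings `x^α g(x)` (with `g` nowhere vanishing), then each factor is a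
normal crossings: `f₁ = x^β g₁`, `f₂ = x^γ g₂` with `β + γ = α` and `g₁, g₂` nonvanishing
analytic on a possibly smaller neighborhood of `0`. -/
theorem normal_crossings_factors
    (q : ℕ) (U : Set (Fin q → ℝ)) (hUopen : IsOpen U) (hU0 : (0 : Fin q → ℝ) ∈ U)
    (hUconn : IsConnected U)
    (f₁ f₂ g : (Fin q → ℝ) → ℝ) (α : Fin q → ℕ)
    (hf₁ : AnalyticOnNhd ℝ f₁ U) (hf₂ : AnalyticOnNhd ℝ f₂ U) (hg : AnalyticOnNhd ℝ g U)
    (hg0 : ∀ x ∈ U, g x ≠ 0)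
    (heq : ∀ x ∈ U, f₁ x * f₂ x = (∏ i, x i ^ α i) * g x) :
    ∃ β γ : Fin q → ℕ, (∀ i, β i + γ i = α i) ∧
      ∃ V : Set (Fin q → ℝ), IsOpen V ∧ (0 : Fin q → ℝ) ∈ V ∧ V ⊆ U ∧
        ∃ g₁ g₂ : (Fin q → ℝ) → ℝ,
          AnalyticOnNhd ℝ g₁ V ∧ AnalyticOnNhd ℝ g₂ V ∧
          (∀ x ∈ V, g₁ x ≠ 0) ∧ (∀ x ∈ V, g₂ x ≠ 0) ∧
          (∀ x ∈ V, f₁ x = (∏ i, x i ^ β i) * g₁ x) ∧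
          (∀ x ∈ V, f₂ x = (∏ i, x i ^ γ i) * g₂ x) :=
  normal_crossings_factors_general q U hUopen hU0 f₁ f₂ g α hf₁ hf₂ hg hg0 heq
end

section
/- Let f : Ω_ε(ρ) → ℝ be C¹ with ∂_i f ∈ L¹(Ω_ε(ρ)) for a fixed i. Then the i-th partial derivative of f ∘ ψ̄_{γ,ε}⁻¹ belongs to L¹(Ω_ε(ρ^γ)); indeed ∫_{Ω_ε(ρ^γ)} |∂_i (f ∘ ψ̄_{γ,ε}⁻¹)| ≤ (∏_{j≠i} γ_j ρ_j^{γ_j−1}) · ∫_{Ω_ε(ρ)} |∂_i f|. -/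
open Finset MeasureTheory

/-- The open orthant box `Ω_ε(ρ) = {x : 0 < (−1)^{ε_j} x_j < ρ_j ∀j}`. -/
def OmegaBox (q : ℕ) (ε : Fin q → ℕ) (ρ : Fin q → ℝ) : Set (Fin q → ℝ) :=
  {x | ∀ j, 0 < (-1 : ℝ) ^ ε j * x j ∧ (-1 : ℝ) ^ ε j * x j < ρ j}

/-- The inverse power substitution `ψ̄_{γ,ε}⁻¹(x) = ((−1)^{ε_j} |x_j|^{1/γ_j})_j`. -/
noncomputable def psiInv (q : ℕ) (γ ε : Fin q → ℕ) (x : Fin q → ℝ) : Fin q → ℝ :=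
  fun j => (-1 : ℝ) ^ ε j * |x j| ^ ((γ j : ℝ)⁻¹)

/-! The substitution `ψ̄ = ψ̄_{γ,ε}` is a diagonal diffeomorphism of `Ω_ε(ρ)` onto `Ω_ε(ρ^γ)`
whose Jacobian at `y` is `∏ⱼ γⱼ |yⱼ|^{γⱼ-1}`. By the chain rule
`∂ᵢ(f ∘ ψ̄⁻¹)(ψ̄ y) = ∂ᵢf(y) / (γᵢ |yᵢ|^{γᵢ-1})`, so after the change of variables `x = ψ̄ y` the
integrand becomes `∏_{j≠i} γⱼ |yⱼ|^{γⱼ-1} · |∂ᵢf(y)|`, and each remaining factor is at most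
`γⱼ ρⱼ^{γⱼ-1}` on `Ω_ε(ρ)`. -/

open Set Topology

theorem integrableOn_image_and_setIntegral_abs_le {E : Type*} [NormedAddCommGroup E]
    [NormedSpace ℝ E] [FiniteDimensional ℝ E] [MeasurableSpace E] [BorelSpace E]
    (μ : Measure E) [μ.IsAddHaarMeasure] {s : Set E} {ψ : E → E} {ψ' : E → E →L[ℝ] E}
    (hs : MeasurableSet s) (hψ' : ∀ y ∈ s, HasFDerivWithinAt ψ (ψ' y) s y) (hψ : InjOn ψ s)
    {g F w : E → ℝ} {C : ℝ} (hF : IntegrableOn F s μ)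
    (hw : AEStronglyMeasurable w (μ.restrict s))
    (hw_nonneg : ∀ y ∈ s, 0 ≤ w y) (hw_le : ∀ y ∈ s, w y ≤ C)
    (hg : ∀ y ∈ s, |(ψ' y).det| * g (ψ y) = w y * F y) :
    IntegrableOn g (ψ '' s) μ ∧ ∫ x in ψ '' s, |g x| ∂μ ≤ C * ∫ y in s, |F y| ∂μ := by
  have hwF : IntegrableOn (fun y => w y * F y) s μ := by
    refine hF.bdd_mul (c := C) hw ?_
    filter_upwards [ae_restrict_mem hs] with y hy
    rw [Real.norm_eq_abs, abs_of_nonneg (hw_nonneg y hy)]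
    exact hw_le y hy
  refine ⟨(integrableOn_image_iff_integrableOn_abs_det_fderiv_smul μ hs hψ' hψ g).2
    (hwF.congr_fun (fun y hy => (hg y hy).symm) hs), ?_⟩
  rw [integral_image_eq_integral_abs_det_fderiv_smul μ hs hψ' hψ, ← integral_const_mul]
  refine integral_mono_of_nonneg (.of_forall fun y => by positivity) (hF.abs.const_mul C) ?_
  filter_upwards [ae_restrict_mem hs] with y hy
  calc |(ψ' y).det| • |g (ψ y)| = w y * |F y| := by
        rw [smul_eq_mul, ← abs_abs (ψ' y).det, ← abs_mul, hg y hy, abs_mul,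
          abs_of_nonneg (hw_nonneg y hy)]
    _ ≤ C * |F y| := mul_le_mul_of_nonneg_right (hw_le y hy) (abs_nonneg _)

section SignedPower

variable {s t a : ℝ}

lemma abs_eq_mul_of_abs_eq_one (hs : |s| = 1) (ht : 0 < s * t) : |t| = s * t := by
  rw [← abs_of_pos ht, abs_mul, hs, one_mul]

lemma mul_self_eq_one_of_abs_eq_one (hs : |s| = 1) : s * s = 1 := by
  rw [← abs_mul_abs_self, hs, one_mul]

lemma abs_mul_abs_rpow_of_abs_eq_one (hs : |s| = 1) : |s * |t| ^ a| = |t| ^ a := by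
  rw [abs_mul, hs, one_mul, abs_of_nonneg (by positivity)]

lemma mul_abs_mul_abs_rpow_rpow_inv (hs : |s| = 1) (ht : 0 < s * t) (ha : a ≠ 0) :
    s * |s * |t| ^ a| ^ a⁻¹ = t := by
  rw [abs_mul_abs_rpow_of_abs_eq_one hs, Real.rpow_rpow_inv (abs_nonneg t) ha,
    abs_eq_mul_of_abs_eq_one hs ht, ← mul_assoc, mul_self_eq_one_of_abs_eq_one hs, one_mul]

lemma hasDerivAt_mul_abs_rpow (hs : |s| = 1) (ht : 0 < s * t) (a : ℝ) :
    HasDerivAt (fun u => s * |u| ^ a) (a * |t| ^ (a - 1)) t := by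
  have hlin : HasDerivAt (fun u => s * u) s t := by
    simpa using (hasDerivAt_id t).const_mul s
  have hsmooth := (hlin.rpow_const (p := a) (Or.inl ht.ne')).const_mul s
  have heq : (fun u => s * (s * u) ^ a) =ᶠ[𝓝 t] fun u => s * |u| ^ a := by
    filter_upwards [(isOpen_lt continuous_const (continuous_const_mul s)).mem_nhds ht] with u hu
    rw [abs_eq_mul_of_abs_eq_one hs hu]
  refine (hsmooth.congr_of_eventuallyEq heq.symm).congr_deriv ?_
  rw [abs_eq_mul_of_abs_eq_one hs ht]
  linear_combination (a * (s * t) ^ (a - 1)) * mul_self_eq_one_of_abs_eq_one hs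

/-- The derivatives of `u ↦ s |u|^a` at `t` and of its inverse `u ↦ s |u|^{a⁻¹}` at `s |t|^a`
multiply to `1`. -/
lemma inv_mul_rpow_mul_mul_rpow_eq_one (hs : |s| = 1) (ht : t ≠ 0) (ha : a ≠ 0) :
    a⁻¹ * |s * |t| ^ a| ^ (a⁻¹ - 1) * (a * |t| ^ (a - 1)) = 1 := by
  have ht' : 0 < |t| := abs_pos.2 ht
  rw [abs_mul_abs_rpow_of_abs_eq_one hs, ← Real.rpow_mul ht'.le,
    mul_mul_mul_comm, mul_comm a⁻¹, mul_inv_cancel₀ ha, ← Real.rpow_add ht',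
    show a * (a⁻¹ - 1) + (a - 1) = 0 by field_simp; ring, Real.rpow_zero, one_mul]

end SignedPower

section Diagonal

variable {ι : Type*}

def diagonalCLM (d : ι → ℝ) : (ι → ℝ) →L[ℝ] (ι → ℝ) :=
  ContinuousLinearMap.pi fun j => d j • ContinuousLinearMap.proj j

lemma diagonalCLM_single [DecidableEq ι] (d : ι → ℝ) (i : ι) (c : ℝ) :
    diagonalCLM d (Pi.single i c) = d i • Pi.single i c := by
  ext j
  by_cases h : j = i <;> simp [diagonalCLM, h]

lemma det_diagonalCLM [Fintype ι] [DecidableEq ι] (d : ι → ℝ) :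
    (diagonalCLM d).det = ∏ j, d j := by
  rw [← Matrix.det_diagonal, ← LinearMap.det_toLin', Matrix.diagonal_toLin']
  rfl

lemma hasFDerivAt_pi_map [Fintype ι] {g : ι → ℝ → ℝ} {d x : ι → ℝ}
    (hg : ∀ j, HasDerivAt (g j) (d j) (x j)) :
    HasFDerivAt (fun z j => g j (z j)) (diagonalCLM d) x :=
  hasFDerivAt_pi.2 fun j => (hg j).comp_hasFDerivAt x (hasFDerivAt_apply j x)

lemma fderiv_comp_apply_single [Fintype ι] [DecidableEq ι] {F : Type*}
    [NormedAddCommGroup F] [NormedSpace ℝ F] {f : (ι → ℝ) → F} {Φ : (ι → ℝ) → ι → ℝ} {d x : ι → ℝ}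
    (hΦ : HasFDerivAt Φ (diagonalCLM d) x) (hf : DifferentiableAt ℝ f (Φ x)) (i : ι) :
    fderiv ℝ (f ∘ Φ) x (Pi.single i 1) = d i • fderiv ℝ f (Φ x) (Pi.single i 1) := by
  have hcomp : HasFDerivAt (f ∘ Φ) ((fderiv ℝ f (Φ x)).comp (diagonalCLM d)) x :=
    hf.hasFDerivAt.comp x hΦ
  rw [hcomp.fderiv, ContinuousLinearMap.comp_apply, diagonalCLM_single, map_smul]

end Diagonal

section SignedPowMap

variable {ι : Type*} {ε : ι → ℕ} {a : ι → ℝ}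

/-- The paper's `ψ̄_{a,ε}`, with real exponents `a`. -/
noncomputable def signedPowMap (ε : ι → ℕ) (a : ι → ℝ) (x : ι → ℝ) : ι → ℝ :=
  fun j => (-1 : ℝ) ^ ε j * |x j| ^ a j

lemma psiInv_eq_signedPowMap (q : ℕ) (γ ε : Fin q → ℕ) :
    psiInv q γ ε = signedPowMap ε (fun j => (γ j : ℝ))⁻¹ :=
  rfl

lemma hasFDerivAt_signedPowMap [Fintype ι] (ε : ι → ℕ) (a : ι → ℝ) {x : ι → ℝ}
    (hx : ∀ j, 0 < (-1 : ℝ) ^ ε j * x j) :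
    HasFDerivAt (signedPowMap ε a) (diagonalCLM fun j => a j * |x j| ^ (a j - 1)) x :=
  hasFDerivAt_pi_map fun j => hasDerivAt_mul_abs_rpow (abs_neg_one_pow _) (hx j) (a j)

lemma neg_one_pow_mul_signedPowMap (x : ι → ℝ) (j : ι) :
    (-1 : ℝ) ^ ε j * signedPowMap ε a x j = |x j| ^ a j := by
  rw [signedPowMap, ← mul_assoc, mul_self_eq_one_of_abs_eq_one (abs_neg_one_pow _), one_mul]

lemma signedPowMap_inv_signedPowMap (ha : ∀ j, a j ≠ 0) {y : ι → ℝ}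
    (hy : ∀ j, 0 < (-1 : ℝ) ^ ε j * y j) :
    signedPowMap ε a⁻¹ (signedPowMap ε a y) = y :=
  funext fun j => mul_abs_mul_abs_rpow_rpow_inv (abs_neg_one_pow _) (hy j) (ha j)

/-- The `i`-th diagonal entry of the Jacobian of `ψ̄_{a,ε}` cancels the chain-rule factor of
`ψ̄_{a,ε}⁻¹` at `ψ̄_{a,ε} y`. -/
lemma abs_det_mul_fderiv_comp_signedPowMap_inv [Fintype ι] [DecidableEq ι]
    (ha : ∀ j, 0 < a j) {y : ι → ℝ} (hy : ∀ j, 0 < (-1 : ℝ) ^ ε j * y j) {f : (ι → ℝ) → ℝ}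
    (hf : DifferentiableAt ℝ f y) (i : ι) :
    |(diagonalCLM fun j => a j * |y j| ^ (a j - 1)).det| *
        fderiv ℝ (f ∘ signedPowMap ε a⁻¹) (signedPowMap ε a y) (Pi.single i 1) =
      (∏ j ∈ univ.erase i, a j * |y j| ^ (a j - 1)) * fderiv ℝ f y (Pi.single i 1) := by
  have hy0 : ∀ j, y j ≠ 0 := fun j h => by simpa [h] using hy j
  have hψy : ∀ j, 0 < (-1 : ℝ) ^ ε j * signedPowMap ε a y j := fun j => by
    rw [neg_one_pow_mul_signedPowMap]
    exact Real.rpow_pos_of_pos (abs_pos.2 (hy0 j)) _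
  have hD : ∀ j, 0 < a j * |y j| ^ (a j - 1) :=
    fun j => mul_pos (ha j) (Real.rpow_pos_of_pos (abs_pos.2 (hy0 j)) _)
  have hinv := signedPowMap_inv_signedPowMap (fun j => (ha j).ne') hy
  have hcancel := inv_mul_rpow_mul_mul_rpow_eq_one (abs_neg_one_pow (ε i)) (hy0 i) (ha i).ne'
  rw [fderiv_comp_apply_single (hasFDerivAt_signedPowMap ε a⁻¹ hψy) (by rwa [hinv]) i, hinv,
    det_diagonalCLM, abs_of_pos (prod_pos fun j _ => hD j), ← mul_prod_erase _ _ (mem_univ i),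
    smul_eq_mul]
  simp only [Pi.inv_apply, signedPowMap] at hcancel ⊢
  linear_combination (∏ j ∈ univ.erase i, a j * |y j| ^ (a j - 1)) *
    fderiv ℝ f y (Pi.single i 1) * hcancel

end SignedPowMap

section OmegaBox

variable {q : ℕ} {ε : Fin q → ℕ} {ρ : Fin q → ℝ}

lemma isOpen_omegaBox : IsOpen (OmegaBox q ε ρ) := by
  have hbox : OmegaBox q ε ρ =
      ⋂ j, (fun x : Fin q → ℝ => (-1 : ℝ) ^ ε j * x j) ⁻¹' Ioo 0 (ρ j) := by
    ext x
    simp [OmegaBox]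
  rw [hbox]
  exact isOpen_iInter_of_finite fun j => isOpen_Ioo.preimage (by fun_prop)

lemma mapsTo_signedPowMap_omegaBox {a : Fin q → ℝ} (ha : ∀ j, 0 < a j) :
    MapsTo (signedPowMap ε a) (OmegaBox q ε ρ) (OmegaBox q ε fun j => ρ j ^ a j) := by
  intro y hy j
  rw [neg_one_pow_mul_signedPowMap, abs_eq_mul_of_abs_eq_one (abs_neg_one_pow _) (hy j).1]
  exact ⟨Real.rpow_pos_of_pos (hy j).1 _, Real.rpow_lt_rpow (hy j).1.le (hy j).2 (ha j)⟩

lemma bijOn_signedPowMap_omegaBox {a : Fin q → ℝ} (ha : ∀ j, 0 < a j) (hρ : ∀ j, 0 ≤ ρ j) :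
    BijOn (signedPowMap ε a) (OmegaBox q ε ρ) (OmegaBox q ε fun j => ρ j ^ a j) := by
  have hback :
      MapsTo (signedPowMap ε a⁻¹) (OmegaBox q ε fun j => ρ j ^ a j) (OmegaBox q ε ρ) := by
    have hmaps := mapsTo_signedPowMap_omegaBox (ε := ε) (ρ := fun j => ρ j ^ a j) (a := a⁻¹)
      fun j => inv_pos.2 (ha j)
    have hρ' : (fun j => (ρ j ^ a j) ^ a⁻¹ j) = ρ :=
      funext fun j => Real.rpow_rpow_inv (hρ j) (ha j).ne'
    rwa [hρ'] at hmaps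
  refine InvOn.bijOn ⟨fun y hy => ?_, fun x hx => ?_⟩ (mapsTo_signedPowMap_omegaBox ha) hback
  · exact signedPowMap_inv_signedPowMap (fun j => (ha j).ne') fun j => (hy j).1
  · simpa only [inv_inv] using signedPowMap_inv_signedPowMap (a := a⁻¹)
      (fun j => inv_ne_zero (ha j).ne') fun j => (hx j).1

lemma prod_mul_abs_rpow_le_of_mem_omegaBox {γ : Fin q → ℕ} (hγ : ∀ j, 0 < γ j) {y : Fin q → ℝ}
    (hy : y ∈ OmegaBox q ε ρ) (s : Finset (Fin q)) :
    ∏ j ∈ s, (γ j : ℝ) * |y j| ^ ((γ j : ℝ) - 1) ≤ ∏ j ∈ s, (γ j : ℝ) * ρ j ^ (γ j - 1) := by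
  refine prod_le_prod (fun j _ => by positivity) fun j _ => ?_
  rw [← Nat.cast_pred (hγ j), Real.rpow_natCast,
    abs_eq_mul_of_abs_eq_one (abs_neg_one_pow _) (hy j).1]
  gcongr
  · exact (hy j).1.le
  · exact (hy j).2.le

end OmegaBox

theorem partial_deriv_L1_power_substitution_general
    (q : ℕ) (γ ε : Fin q → ℕ) (hγ : ∀ j, 0 < γ j)
    (ρ : Fin q → ℝ) (hρ : ∀ j, 0 < ρ j) (i : Fin q)
    (f : (Fin q → ℝ) → ℝ)
    (hf : ContDiffOn ℝ 1 f (OmegaBox q ε ρ))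
    (hint : IntegrableOn (fun x => fderiv ℝ f x (Pi.single i 1)) (OmegaBox q ε ρ)) :
    IntegrableOn (fun x => fderiv ℝ (f ∘ psiInv q γ ε) x (Pi.single i 1))
      (OmegaBox q ε (fun j => ρ j ^ γ j)) ∧
    (∫ x in OmegaBox q ε (fun j => ρ j ^ γ j),
        |fderiv ℝ (f ∘ psiInv q γ ε) x (Pi.single i 1)|)
      ≤ (∏ j ∈ Finset.univ.erase i, (γ j : ℝ) * ρ j ^ (γ j - 1)) *
        ∫ x in OmegaBox q ε ρ, |fderiv ℝ f x (Pi.single i 1)| := by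
  set a : Fin q → ℝ := fun j => γ j
  have ha : ∀ j, 0 < a j := fun j => Nat.cast_pos.2 (hγ j)
  have hB : IsOpen (OmegaBox q ε ρ) := isOpen_omegaBox
  have hψ := bijOn_signedPowMap_omegaBox (ε := ε) ha fun j => (hρ j).le
  have himage : OmegaBox q ε (fun j => ρ j ^ γ j) = signedPowMap ε a '' OmegaBox q ε ρ := by
    simp_rw [hψ.image_eq, a, Real.rpow_natCast]
  rw [himage, psiInv_eq_signedPowMap]
  refine integrableOn_image_and_setIntegral_abs_le volume hB.measurableSet
    (fun y hy => (hasFDerivAt_signedPowMap ε a fun j => (hy j).1).hasFDerivWithinAt)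
    hψ.injOn hint (by fun_prop : Measurable _).aestronglyMeasurable
    (fun y _ => prod_nonneg fun j _ => by positivity)
    (fun y hy => prod_mul_abs_rpow_le_of_mem_omegaBox hγ hy _)
    (fun y hy => abs_det_mul_fderiv_comp_signedPowMap_inv ha (fun j => (hy j).1)
      ((hf.differentiableOn one_ne_zero).differentiableAt (hB.mem_nhds hy)) i)

/-- If `f` is `C¹` on `Ω_ε(ρ)` with `∂ᵢ f ∈ L¹(Ω_ε(ρ))`, then
`∂ᵢ (f ∘ ψ̄_{γ,ε}⁻¹) ∈ L¹(Ω_ε(ρ^γ))`, with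
`∫ |∂ᵢ (f ∘ ψ̄_{γ,ε}⁻¹)| ≤ (∏_{j≠i} γ_j ρ_j^{γ_j−1}) ∫ |∂ᵢ f|`. -/
theorem partial_deriv_L1_power_substitution
    (q : ℕ) (γ ε : Fin q → ℕ) (hγ : ∀ j, 0 < γ j) (hε : ∀ j, ε j ≤ 1)
    (ρ : Fin q → ℝ) (hρ : ∀ j, 0 < ρ j) (i : Fin q)
    (f : (Fin q → ℝ) → ℝ)
    (hf : ContDiffOn ℝ 1 f (OmegaBox q ε ρ))
    (hint : IntegrableOn (fun x => fderiv ℝ f x (Pi.single i 1)) (OmegaBox q ε ρ)) :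
    IntegrableOn (fun x => fderiv ℝ (f ∘ psiInv q γ ε) x (Pi.single i 1))
      (OmegaBox q ε (fun j => ρ j ^ γ j)) ∧
    (∫ x in OmegaBox q ε (fun j => ρ j ^ γ j),
        |fderiv ℝ (f ∘ psiInv q γ ε) x (Pi.single i 1)|)
      ≤ (∏ j ∈ Finset.univ.erase i, (γ j : ℝ) * ρ j ^ (γ j - 1)) *
        ∫ x in OmegaBox q ε ρ, |fderiv ℝ f x (Pi.single i 1)| :=
  partial_deriv_L1_power_substitution_general q γ ε hγ ρ hρ i f hf hint
end
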